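/- arXiv:2409.16387 — 6 statements merged into one kernel-verified Lean document; each statement's English description precedes it below -/
import Mathlib

section
/- There exists a universal constant C > 0 such that for every n ≥ 1, all real numbers d, d* ∈ [0, 2), and every partition λ ⊢ 2n with λ_1 ≥ d·n and λ*_1 ≥ d*·n, one has f_λ² ≤ exp((2 − d − d*)·n·log n + C·n). -/
/-!
Removing the largest entry of a standard tableau leaves a standard tableau of the shape with
that corner removed, so `f_μ ≤ ∑_c f_{μ - c}` over the corners `c`. Let `m` count the cells
off the first row and column. At most two corners lie on the first row or column, and removing
them keeps `m`; the `k` remaining corners lie in distinct rows and columns, whence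
`k (k + 1) ≤ 2 m`, and removing one of them lowers `m` by one. With Cauchy–Schwarz this gives
`f_μ² ≤ 36 ^ |μ| · m!` by induction. Finally `m + λ₁ + λ*₁ ≤ |λ| + 1 = 2n + 1` bounds `m` by
`(2 - d - d*) n + 1`, and `m! ≤ (2n)^m`.
-/

open scoped BigOperators

noncomputable section

namespace BRT

/-- A semistandard tableau is standard if each value `k < |μ|` occurs in exactly one cell. -/
def IsStandard (μ : YoungDiagram) (T : SemistandardYoungTableau μ) : Prop :=
  ∀ k < μ.card, ∃! c : ℕ × ℕ, c ∈ μ.cells ∧ T c.1 c.2 = k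

/-- `fSYT μ` is the number of standard Young tableaux of shape `μ`. -/
def fSYT (μ : YoungDiagram) : ℕ :=
  Nat.card {T : SemistandardYoungTableau μ // IsStandard μ T}

open Finset Nat

section Corners

variable {μ : YoungDiagram} {c x : ℕ × ℕ}

def corners (μ : YoungDiagram) : Finset (ℕ × ℕ) :=
  {c ∈ μ.cells | ∀ x ∈ μ, c ≤ x → x = c}

lemma mem_corners : c ∈ corners μ ↔ c ∈ μ ∧ ∀ x ∈ μ, c ≤ x → x = c := by
  simp [corners]

/-- The cells of `μ` not weakly south-east of `c`; for a corner `c` this removes just `c`. -/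
def eraseCorner (μ : YoungDiagram) (c : ℕ × ℕ) : YoungDiagram where
  cells := {x ∈ μ.cells | ¬c ≤ x}
  isLowerSet _ _ hyx hx := by
    simp only [coe_filter, Set.mem_ofPred_eq, YoungDiagram.mem_cells] at hx ⊢
    exact ⟨μ.isLowerSet hyx hx.1, fun hcy => hx.2 (hcy.trans hyx)⟩

lemma mem_eraseCorner : x ∈ eraseCorner μ c ↔ x ∈ μ ∧ ¬c ≤ x := by
  simp [eraseCorner, ← YoungDiagram.mem_cells]

lemma eraseCorner_le : eraseCorner μ c ≤ μ := fun _ hx => (mem_eraseCorner.1 hx).1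

lemma eq_of_mem_of_notMem_eraseCorner (hc : c ∈ corners μ) (hx : x ∈ μ)
    (hx' : x ∉ eraseCorner μ c) : x = c :=
  (mem_corners.1 hc).2 x hx (by simpa [mem_eraseCorner, hx] using hx')

lemma cells_eraseCorner (hc : c ∈ corners μ) : (eraseCorner μ c).cells = μ.cells.erase c := by
  ext x
  simp only [YoungDiagram.mem_cells, mem_erase, mem_eraseCorner]
  refine ⟨fun ⟨hx, hcx⟩ => ⟨fun hxc => hcx (hxc ▸ le_rfl), hx⟩, fun ⟨hxc, hx⟩ => ⟨hx, ?_⟩⟩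
  exact fun hcx => hxc ((mem_corners.1 hc).2 x hx hcx)

lemma card_eraseCorner (hc : c ∈ corners μ) : (eraseCorner μ c).card = μ.card - 1 := by
  rw [YoungDiagram.card, cells_eraseCorner hc,
    card_erase_of_mem ((YoungDiagram.mem_cells _).2 (mem_corners.1 hc).1)]

lemma eq_of_mem_corners_of_fst_eq {c' : ℕ × ℕ} (hc : c ∈ corners μ) (hc' : c' ∈ corners μ)
    (h : c.1 = c'.1) : c = c' := by
  rcases le_total c.2 c'.2 with h2 | h2
  · exact ((mem_corners.1 hc).2 c' (mem_corners.1 hc').1 ⟨h.le, h2⟩).symm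
  · exact (mem_corners.1 hc').2 c (mem_corners.1 hc).1 ⟨h.ge, h2⟩

lemma eq_of_mem_corners_of_snd_eq {c' : ℕ × ℕ} (hc : c ∈ corners μ) (hc' : c' ∈ corners μ)
    (h : c.2 = c'.2) : c = c' := by
  rcases le_total c.1 c'.1 with h1 | h1
  · exact ((mem_corners.1 hc).2 c' (mem_corners.1 hc').1 ⟨h1, h.le⟩).symm
  · exact (mem_corners.1 hc').2 c (mem_corners.1 hc).1 ⟨h1, h.ge⟩

end Corners

section Tableaux

variable {μ ν : YoungDiagram} {T : SemistandardYoungTableau μ}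

lemma apply_le_apply_of_le (T : SemistandardYoungTableau μ) {x y : ℕ × ℕ} (hxy : x ≤ y)
    (hy : y ∈ μ) : T x.1 x.2 ≤ T y.1 y.2 :=
  (T.col_weak hxy.1 (μ.up_left_mem le_rfl hxy.2 hy)).trans (T.row_weak_of_le hxy.2 hy)

def restrictTableau (T : SemistandardYoungTableau μ) (h : ν ≤ μ) : SemistandardYoungTableau ν where
  entry i j := if (i, j) ∈ ν then T i j else 0
  row_weak' hj hcell := by
    rw [if_pos (ν.up_left_mem le_rfl hj.le hcell), if_pos hcell]
    exact T.row_weak hj (h hcell)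
  col_strict' hi hcell := by
    rw [if_pos (ν.up_left_mem hi.le le_rfl hcell), if_pos hcell]
    exact T.col_strict hi (h hcell)
  zeros' hcell := if_neg hcell

lemma restrictTableau_apply (h : ν ≤ μ) (i j : ℕ) :
    restrictTableau T h i j = if (i, j) ∈ ν then T i j else 0 := rfl

lemma IsStandard.lt_card (hT : IsStandard μ T) {x : ℕ × ℕ} (hx : x ∈ μ) : T x.1 x.2 < μ.card := by
  have hsub : range μ.card ⊆ μ.cells.image fun c => T c.1 c.2 := fun k hk =>
    have ⟨c, hc, _⟩ := hT k (mem_range.1 hk)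
    mem_image.2 ⟨c, hc⟩
  have himage := eq_of_subset_of_card_le hsub (card_image_le.trans (by simp [YoungDiagram.card]))
  exact mem_range.1 (himage ▸ mem_image_of_mem _ ((YoungDiagram.mem_cells _).2 hx))

lemma IsStandard.eq_of_apply_eq (hT : IsStandard μ T) {x y : ℕ × ℕ} (hx : x ∈ μ) (hy : y ∈ μ)
    (h : T x.1 x.2 = T y.1 y.2) : x = y :=
  (hT _ (hT.lt_card hx)).unique ⟨(YoungDiagram.mem_cells _).2 hx, rfl⟩
    ⟨(YoungDiagram.mem_cells _).2 hy, h.symm⟩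

instance (μ : YoungDiagram) : Finite {T : SemistandardYoungTableau μ // IsStandard μ T} := by
  refine Finite.of_injective
    (fun T (x : μ.cells) => (⟨T.1 x.1.1 x.1.2, T.2.lt_card ((μ.mem_cells _).1 x.2)⟩ : Fin μ.card))
    fun T S h => Subtype.ext (SemistandardYoungTableau.ext fun i j => ?_)
  by_cases hij : (i, j) ∈ μ
  · exact congrArg Fin.val (congrFun h ⟨(i, j), (μ.mem_cells _).2 hij⟩)
  · rw [T.1.zeros hij, S.1.zeros hij]

lemma fSYT_le_one_of_card_eq_zero (hμ : μ.card = 0) : fSYT μ ≤ 1 := by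
  have hempty (i j : ℕ) : (i, j) ∉ μ := by
    simp [← YoungDiagram.mem_cells, card_eq_zero.1 hμ]
  refine Finite.card_le_one_iff_subsingleton.2 ⟨fun T S => Subtype.ext ?_⟩
  exact SemistandardYoungTableau.ext fun i j => by
    rw [T.1.zeros (hempty i j), S.1.zeros (hempty i j)]

lemma IsStandard.exists_mem_corners (hT : IsStandard μ T) (hμ : μ.card ≠ 0) :
    ∃ c ∈ corners μ, T c.1 c.2 = μ.card - 1 := by
  obtain ⟨c, ⟨hc, hTc⟩, -⟩ := hT (μ.card - 1) (by omega)
  rw [YoungDiagram.mem_cells] at hc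
  refine ⟨c, mem_corners.2 ⟨hc, fun x hx hcx => hT.eq_of_apply_eq hx hc ?_⟩, hTc⟩
  have := hT.lt_card hx
  have := apply_le_apply_of_le T hcx hx
  omega

lemma IsStandard.restrictTableau_eraseCorner (hT : IsStandard μ T) {c : ℕ × ℕ}
    (hc : c ∈ corners μ) (htop : T c.1 c.2 = μ.card - 1) :
    IsStandard (eraseCorner μ c) (restrictTableau T eraseCorner_le) := by
  intro k hk
  rw [card_eraseCorner hc] at hk
  obtain ⟨x, ⟨hx, hTx⟩, hxuniq⟩ := hT k (by omega)
  have hxc : x ≠ c := by rintro rfl; omega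
  have hxν : x ∈ eraseCorner μ c := by
    rw [← YoungDiagram.mem_cells, cells_eraseCorner hc]; exact mem_erase.2 ⟨hxc, hx⟩
  refine ⟨x, ⟨(YoungDiagram.mem_cells _).2 hxν, by rwa [restrictTableau_apply, if_pos hxν]⟩, ?_⟩
  rintro y ⟨hy, hTy⟩
  rw [YoungDiagram.mem_cells] at hy
  rw [restrictTableau_apply, if_pos hy] at hTy
  exact hxuniq y ⟨(YoungDiagram.mem_cells _).2 (eraseCorner_le hy), hTy⟩

lemma fSYT_le_sum_corners (hμ : μ.card ≠ 0) :
    fSYT μ ≤ ∑ c ∈ corners μ, fSYT (eraseCorner μ c) := by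
  choose top htop htopT using fun T : {T // IsStandard μ T} => T.2.exists_mem_corners hμ
  let Φ (T : {T // IsStandard μ T}) :
      Σ c : corners μ, {S // IsStandard (eraseCorner μ c) S} :=
    ⟨⟨top T, htop T⟩, ⟨_, T.2.restrictTableau_eraseCorner (htop T) (htopT T)⟩⟩
  have hΦ : Function.Injective Φ := by
    intro T S h
    have hc : top T = top S := congrArg (fun p => p.1.1) h
    have hres (i j : ℕ) := congrFun (congrFun (congrArg (fun p : Σ c : corners μ,
      {S // IsStandard (eraseCorner μ c) S} => (p.2.1 : ℕ → ℕ → ℕ)) h) i) j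
    refine Subtype.ext (SemistandardYoungTableau.ext fun i j => ?_)
    by_cases hμij : (i, j) ∈ μ
    · by_cases hν : (i, j) ∈ eraseCorner μ (top T)
      · simpa [Φ, restrictTableau_apply, hν, ← hc] using hres i j
      · have hij := eq_of_mem_of_notMem_eraseCorner (htop T) hμij hν
        have hT := htopT T
        have hS := htopT S
        rw [← hij] at hT
        rw [← hc, ← hij] at hS
        exact hT.trans hS.symm
    · rw [T.1.zeros hμij, S.1.zeros hμij]
  unfold fSYT
  rw [← sum_attach, ← univ_eq_attach, ← Nat.card_sigma]
  exact Nat.card_le_card_of_injective Φ hΦ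

end Tableaux

section InnerCells

variable {μ : YoungDiagram} {c : ℕ × ℕ}

def innerCells (μ : YoungDiagram) : Finset (ℕ × ℕ) :=
  {c ∈ μ.cells | c.1 ≠ 0 ∧ c.2 ≠ 0}

lemma innerCells_eraseCorner (hc : c ∈ corners μ) :
    innerCells (eraseCorner μ c) = (innerCells μ).erase c := by
  rw [innerCells, cells_eraseCorner hc, filter_erase]
  rfl

lemma card_innerCells_add_rowLen_add_colLen_le (μ : YoungDiagram) :
    #(innerCells μ) + μ.rowLen 0 + μ.colLen 0 ≤ μ.card + 1 := by
  have hcorner : #(μ.row 0 ∩ μ.col 0) ≤ 1 :=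
    card_le_one.2 fun a ha b hb => by
      simp only [mem_inter, YoungDiagram.mem_row_iff, YoungDiagram.mem_col_iff] at ha hb
      exact Prod.ext (ha.1.2.trans hb.1.2.symm) (ha.2.2.trans hb.2.2.symm)
  have hdisj : Disjoint (μ.row 0 ∪ μ.col 0) (innerCells μ) := by
    refine disjoint_left.2 fun a ha hin => ?_
    simp only [mem_union, YoungDiagram.mem_row_iff, YoungDiagram.mem_col_iff] at ha
    simp only [innerCells, mem_filter] at hin
    tauto
  have hsub : μ.row 0 ∪ μ.col 0 ∪ innerCells μ ⊆ μ.cells :=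
    union_subset (union_subset (filter_subset _ _) (filter_subset _ _)) (filter_subset _ _)
  have := card_le_card hsub
  rw [card_union_of_disjoint hdisj] at this
  have := card_union_add_card_inter (μ.row 0) (μ.col 0)
  rw [μ.rowLen_eq_card, μ.colLen_eq_card, YoungDiagram.card]
  omega

lemma card_mul_succ_le_two_mul_sum (s : Finset ℕ) (hs : 0 ∉ s) :
    #s * (#s + 1) ≤ 2 * ∑ x ∈ s, x := by
  induction s using Finset.induction_on_max with
  | empty => simp
  | insert a s hlt ih =>
    have has : a ∉ s := fun h => lt_irrefl a (hlt a h)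
    have hcard : #(insert a s) ≤ a := by
      calc #(insert a s) ≤ #(Icc 1 a) := card_le_card fun x hx => by
            rcases mem_insert.1 hx with rfl | hx
            · exact mem_Icc.2 ⟨pos_of_ne_zero fun h => hs (h ▸ mem_insert_self _ _), le_rfl⟩
            · exact mem_Icc.2 ⟨pos_of_ne_zero fun h => hs (h ▸ mem_insert_of_mem hx),
                (hlt x hx).le⟩
        _ = a := by simp
    rw [card_insert_of_notMem has] at hcard ⊢
    rw [sum_insert has]
    have := ih fun h => hs (mem_insert_of_mem h)
    nlinarith

lemma sum_snd_le_card_innerCells :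
    ∑ c ∈ corners μ with c ∈ innerCells μ, c.2 ≤ #(innerCells μ) := by
  calc ∑ c ∈ corners μ with c ∈ innerCells μ, c.2
      = #((corners μ).filter (· ∈ innerCells μ) |>.sigma fun c => Icc 1 c.2) := by
        simp [card_sigma]
    _ ≤ #(innerCells μ) := by
      refine card_le_card_of_injOn (fun p => (p.1.1, p.2)) (fun p hp => ?_) fun p hp q hq h => ?_
      · simp only [mem_coe, mem_sigma, mem_filter, mem_Icc, innerCells,
          YoungDiagram.mem_cells] at hp ⊢
        obtain ⟨⟨-, hc, hc1, -⟩, ht1, ht2⟩ := hp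
        exact ⟨μ.up_left_mem le_rfl ht2 hc, hc1, by omega⟩
      · simp only [coe_sigma, Set.mem_sigma_iff, coe_filter, Set.mem_ofPred_eq] at hp hq
        obtain ⟨h1, h2⟩ := Prod.mk.inj h
        have := eq_of_mem_corners_of_fst_eq hp.1.1 hq.1.1 h1
        exact Sigma.ext this (heq_of_eq h2)

lemma card_innerCorners_mul_succ_le :
    #{c ∈ corners μ | c ∈ innerCells μ} * (#{c ∈ corners μ | c ∈ innerCells μ} + 1) ≤
      2 * #(innerCells μ) := by
  have hinj : Set.InjOn Prod.snd (({c ∈ corners μ | c ∈ innerCells μ} : Finset _) : Set (ℕ × ℕ)) :=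
    fun c hc c' hc' h => eq_of_mem_corners_of_snd_eq (mem_filter.1 (mem_coe.1 hc)).1
      (mem_filter.1 (mem_coe.1 hc')).1 h
  have hpos : 0 ∉ {c ∈ corners μ | c ∈ innerCells μ}.image Prod.snd := by
    simp only [mem_image, mem_filter, innerCells]
    rintro ⟨c, ⟨-, -, -, hc2⟩, hc0⟩
    exact hc2 hc0
  have := card_mul_succ_le_two_mul_sum _ hpos
  rw [Finset.card_image_of_injOn hinj, sum_image hinj] at this
  have := sum_snd_le_card_innerCells (μ := μ)
  omega

lemma card_outerCorners_le_two : #{c ∈ corners μ | c ∉ innerCells μ} ≤ 2 := by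
  have hrow : #{c ∈ corners μ | c.1 = 0} ≤ 1 := card_le_one.2 fun a ha b hb => by
    rw [mem_filter] at ha hb
    exact eq_of_mem_corners_of_fst_eq ha.1 hb.1 (ha.2.trans hb.2.symm)
  have hcol : #{c ∈ corners μ | c.2 = 0} ≤ 1 := card_le_one.2 fun a ha b hb => by
    rw [mem_filter] at ha hb
    exact eq_of_mem_corners_of_snd_eq ha.1 hb.1 (ha.2.trans hb.2.symm)
  have hsub : {c ∈ corners μ | c ∉ innerCells μ} ⊆
      {c ∈ corners μ | c.1 = 0} ∪ {c ∈ corners μ | c.2 = 0} := fun c hc => by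
    simp only [mem_filter, mem_union, innerCells, mem_corners, YoungDiagram.mem_cells] at hc ⊢
    tauto
  have := (card_le_card hsub).trans (card_union_le _ _)
  omega

end InnerCells

lemma sq_sum_le_card_sq_mul {ι R : Type*} [Semiring R] [LinearOrder R] [IsStrictOrderedRing R]
    [ExistsAddOfLE R] (s : Finset ι) {f : ι → R} {B : R} (h : ∀ i ∈ s, f i ^ 2 ≤ B) :
    (∑ i ∈ s, f i) ^ 2 ≤ (#s : R) ^ 2 * B :=
  calc (∑ i ∈ s, f i) ^ 2 ≤ #s * ∑ i ∈ s, f i ^ 2 := sq_sum_le_card_mul_sum_sq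
    _ ≤ #s * (#s • B) := by gcongr; exact sum_le_card_nsmul s _ B h
    _ = (#s : R) ^ 2 * B := by rw [nsmul_eq_mul, sq, mul_assoc]

theorem fSYT_sq_le (μ : YoungDiagram) : fSYT μ ^ 2 ≤ 36 ^ μ.card * (#(innerCells μ))! := by
  induction hN : μ.card generalizing μ with
  | zero =>
    have h0 : innerCells μ = ∅ :=
      subset_empty.1 ((filter_subset _ _).trans (card_eq_zero.1 hN).le)
    simpa [h0] using fSYT_le_one_of_card_eq_zero hN
  | succ N ih =>
    set m := #(innerCells μ)
    have herase (c) (hc : c ∈ corners μ) :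
        fSYT (eraseCorner μ c) ^ 2 ≤ 36 ^ N * (#((innerCells μ).erase c))! := by
      rw [← innerCells_eraseCorner hc]
      exact ih _ (by rw [card_eraseCorner hc, hN]; rfl)
    have houter : (∑ c ∈ corners μ with c ∉ innerCells μ, fSYT (eraseCorner μ c)) ^ 2 ≤
        4 * (36 ^ N * m !) := by
      refine (sq_sum_le_card_sq_mul (B := 36 ^ N * m !) _ fun c hc => ?_).trans ?_
      · rw [mem_filter] at hc
        simpa [erase_eq_of_notMem hc.2] using herase c hc.1
      · have := card_outerCorners_le_two (μ := μ)
        gcongr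
        nlinarith
    have hinner : (∑ c ∈ corners μ with c ∈ innerCells μ, fSYT (eraseCorner μ c)) ^ 2 ≤
        2 * (36 ^ N * m !) := by
      refine (sq_sum_le_card_sq_mul (B := 36 ^ N * (m - 1)!) _ fun c hc => ?_).trans ?_
      · rw [mem_filter] at hc
        simpa [card_erase_of_mem hc.2] using herase c hc.1
      · have hk := card_innerCorners_mul_succ_le (μ := μ)
        have hm : m * (m - 1)! ≤ m ! := by
          rcases eq_or_ne m 0 with h | h
          · simp [h]
          · exact (mul_factorial_pred h).le
        calc #{c ∈ corners μ | c ∈ innerCells μ} ^ 2 * (36 ^ N * (m - 1)!)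
            ≤ 2 * m * (36 ^ N * (m - 1)!) := by gcongr; nlinarith
          _ = 2 * (36 ^ N * (m * (m - 1)!)) := by ring
          _ ≤ 2 * (36 ^ N * m !) := by gcongr
    calc fSYT μ ^ 2
        ≤ (∑ c ∈ corners μ with c ∉ innerCells μ, fSYT (eraseCorner μ c) +
            ∑ c ∈ corners μ with c ∈ innerCells μ, fSYT (eraseCorner μ c)) ^ 2 := by
          rw [sum_filter_not_add_sum_filter]
          gcongr
          exact fSYT_le_sum_corners (by omega)
      _ ≤ 2 * (4 * (36 ^ N * m !) + 2 * (36 ^ N * m !)) :=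
          add_sq_le.trans (by gcongr)
      _ ≤ 36 ^ (N + 1) * m ! := by rw [pow_succ]; nlinarith

theorem fSYT_sq_le_of_card_eq_two_mul {μ : YoungDiagram} {n : ℕ} (h : μ.card = 2 * n) :
    fSYT μ ^ 2 ≤ 72 ^ (2 * n) * n ^ #(innerCells μ) := by
  set m := #(innerCells μ)
  have hm : m ≤ 2 * n := h ▸ card_le_card (filter_subset _ _)
  calc fSYT μ ^ 2 ≤ 36 ^ (2 * n) * m ! := h ▸ fSYT_sq_le μ
    _ ≤ 36 ^ (2 * n) * (2 ^ (2 * n) * n ^ m) := by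
      gcongr
      calc m ! ≤ (2 * n) ^ m := (factorial_le_pow m).trans (Nat.pow_le_pow_left hm m)
        _ = 2 ^ m * n ^ m := mul_pow ..
        _ ≤ 2 ^ (2 * n) * n ^ m := by gcongr; norm_num
    _ = 72 ^ (2 * n) * n ^ m := by rw [← mul_assoc, ← mul_pow]; norm_num

/-- There is a universal constant `C > 0` such that for every `n ≥ 1`,
all `d, d* ∈ [0, 2)` and every partition `λ ⊢ 2n` with `λ₁ ≥ dn` and `λ*₁ ≥ d*n`, one has
`f_λ² ≤ exp((2 − d − d*) n log n + C n)`. -/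
theorem fSYT_bound :
    ∃ C : ℝ, 0 < C ∧ ∀ n : ℕ, 1 ≤ n → ∀ d dstar : ℝ,
      0 ≤ d → d < 2 → 0 ≤ dstar → dstar < 2 →
      ∀ lam : YoungDiagram, lam.card = 2 * n →
        d * n ≤ (lam.rowLen 0 : ℝ) → dstar * n ≤ (lam.colLen 0 : ℝ) →
        (fSYT lam : ℝ) ^ 2 ≤
          Real.exp ((2 - d - dstar) * n * Real.log n + C * n) := by
  refine ⟨2 * Real.log 72 + 1, by positivity, ?_⟩
  intro n hn d dstar _ _ _ _ lam hlam hrow hcol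
  set m := #(innerCells lam)
  have hm : (m : ℝ) ≤ (2 - d - dstar) * n + 1 := by
    have : (m : ℝ) + lam.rowLen 0 + lam.colLen 0 ≤ 2 * n + 1 := by
      exact_mod_cast hlam ▸ card_innerCells_add_rowLen_add_colLen_le lam
    linarith
  have hnat := fSYT_sq_le_of_card_eq_two_mul hlam
  have hn0 : (0 : ℝ) < n := by exact_mod_cast hn
  calc (fSYT lam : ℝ) ^ 2 ≤ 72 ^ (2 * n) * n ^ m := by exact_mod_cast hnat
    _ = Real.exp ((2 * n : ℕ) * Real.log 72 + m * Real.log n) := by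
      rw [Real.exp_add, ← Real.log_pow, ← Real.log_pow, Real.exp_log (by positivity),
        Real.exp_log (by positivity)]
    _ ≤ Real.exp ((2 - d - dstar) * n * Real.log n + (2 * Real.log 72 + 1) * n) := by
      have hlog_nonneg := Real.log_nonneg (one_le_cast.2 hn)
      have hlog_le := Real.log_le_sub_one_of_pos hn0
      refine Real.exp_le_exp.2 ?_
      push_cast
      nlinarith

end BRT
end
end

section
/- There exists a universal constant C > 0 such that every partition λ ⊢ 2n (for every n ≥ 1) satisfies both Diag(λ) ≤ n·λ_1 − (λ_1·λ*_1)/2 − (λ*_1)²/2 + C·n and Diag(λ) ≥ −n·λ*_1 + (λ_1·λ*_1)/2 + λ_1²/2 − C·n. -/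
open scoped BigOperators

noncomputable section

namespace BRT

/-- The diagonal index `Diag(λ) = Σᵢ C(λᵢ,2) − Σᵢ C(λ*ᵢ,2)` of a Young diagram. -/
def diag (μ : YoungDiagram) : ℤ :=
  (∑ᶠ i : ℕ, ((μ.rowLen i).choose 2 : ℤ)) - ∑ᶠ i : ℕ, ((μ.colLen i).choose 2 : ℤ)

lemma choose_two_cast (a : ℕ) : 2 * ((a.choose 2 : ℕ) : ℤ) = a * (a - 1) := by
  induction a with
  | zero => simp
  | succ m ih =>
    rw [Nat.choose_succ_succ, Nat.choose_one_right]
    push_cast at ih ⊢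
    linarith

lemma rowLen_pos_iff (μ : YoungDiagram) (i : ℕ) : 0 < μ.rowLen i ↔ i < μ.colLen 0 := by
  rw [← YoungDiagram.mem_iff_lt_rowLen, ← YoungDiagram.mem_iff_lt_colLen]

lemma cells_eq_biUnion (μ : YoungDiagram) :
    μ.cells = (Finset.range (μ.colLen 0)).biUnion μ.row := by
  ext ⟨i, j⟩
  simp only [Finset.mem_biUnion, Finset.mem_range, YoungDiagram.mem_row_iff]
  constructor
  · intro h
    refine ⟨i, ?_, ⟨h, rfl⟩⟩
    rw [← rowLen_pos_iff, ← YoungDiagram.mem_iff_lt_rowLen]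
    exact μ.up_left_mem le_rfl (Nat.zero_le _) h
  · rintro ⟨i', _, h, rfl⟩
    exact h

lemma card_eq_sum_rowLen (μ : YoungDiagram) :
    μ.card = ∑ i ∈ Finset.range (μ.colLen 0), μ.rowLen i := by
  rw [YoungDiagram.card, cells_eq_biUnion μ, Finset.card_biUnion]
  · exact Finset.sum_congr rfl fun i _ => (μ.rowLen_eq_card).symm
  · intro x _ y _ hxy
    simp only [Finset.disjoint_left, YoungDiagram.mem_row_iff]
    rintro ⟨a, b⟩ ⟨_, rfl⟩ ⟨_, h⟩
    exact hxy h

lemma finsum_rows (μ : YoungDiagram) :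
    (∑ᶠ i : ℕ, ((μ.rowLen i).choose 2 : ℤ)) =
      ∑ i ∈ Finset.range (μ.colLen 0), ((μ.rowLen i).choose 2 : ℤ) := by
  apply finsum_eq_sum_of_support_subset
  intro i hi
  simp only [Function.mem_support, ne_eq, Int.natCast_eq_zero] at hi
  have h2 : 0 < μ.rowLen i := by
    by_contra h
    exact hi (by simp [Nat.le_zero.mp (not_lt.mp h)])
  simpa using (rowLen_pos_iff μ i).mp h2

lemma finsum_cols (μ : YoungDiagram) :
    (∑ᶠ i : ℕ, ((μ.colLen i).choose 2 : ℤ)) =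
      ∑ i ∈ Finset.range (μ.rowLen 0), ((μ.colLen i).choose 2 : ℤ) := by
  have := finsum_rows μ.transpose
  simpa only [YoungDiagram.rowLen_transpose, YoungDiagram.colLen_transpose] using this

lemma diag_transpose (μ : YoungDiagram) : diag μ.transpose = - diag μ := by
  simp only [diag, YoungDiagram.rowLen_transpose, YoungDiagram.colLen_transpose]
  ring

lemma card_transpose (μ : YoungDiagram) : μ.transpose.card = μ.card := by
  simp [YoungDiagram.card, YoungDiagram.transpose]

/-- Core integer inequality. -/
lemma key (μ : YoungDiagram) (n : ℕ) (hn : 1 ≤ n) (hcard : μ.card = 2 * n) :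
    2 * diag μ ≤ 2 * n * (μ.rowLen 0 : ℤ) - (μ.rowLen 0 : ℤ) * (μ.colLen 0 : ℤ)
      - (μ.colLen 0 : ℤ) ^ 2 + 2 * n := by
  set r := μ.rowLen 0 with hr
  set c := μ.colLen 0 with hc
  -- the diagram is nonempty
  have hne : (0, 0) ∈ μ := by
    have hpos : 0 < μ.card := by omega
    obtain ⟨⟨i, j⟩, hij⟩ := Finset.card_pos.mp hpos
    exact μ.up_left_mem (Nat.zero_le _) (Nat.zero_le _) hij
  have hrpos : 0 < r := YoungDiagram.mem_iff_lt_rowLen.mp hne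
  have hcpos : 0 < c := YoungDiagram.mem_iff_lt_colLen.mp hne
  -- row sums
  have hrowsum : ∑ i ∈ Finset.range c, (μ.rowLen i : ℤ) = 2 * n := by
    have := card_eq_sum_rowLen μ
    rw [hcard] at this
    exact_mod_cast congrArg (Nat.cast : ℕ → ℤ) this.symm
  have hcolsum : ∑ k ∈ Finset.range r, (μ.colLen k : ℤ) = 2 * n := by
    have := card_eq_sum_rowLen μ.transpose
    rw [card_transpose, hcard] at this
    simp only [YoungDiagram.rowLen_transpose, YoungDiagram.colLen_transpose] at this
    exact_mod_cast congrArg (Nat.cast : ℕ → ℤ) this.symm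
  -- pointwise bounds on rows
  have hrow_le : ∀ i ∈ Finset.range c, (μ.rowLen i : ℤ) ≤ r := by
    intro i _
    exact_mod_cast μ.rowLen_anti 0 i (Nat.zero_le _)
  have hrow_ge : ∀ i ∈ Finset.range c, 1 ≤ (μ.rowLen i : ℤ) := by
    intro i hi
    rw [Finset.mem_range] at hi
    exact_mod_cast (rowLen_pos_iff μ i).mpr hi
  -- c ≤ 2n
  have hc2n : (c : ℤ) ≤ 2 * n := by
    rw [← hcolsum]
    have h0 : (0 : ℕ) ∈ Finset.range r := Finset.mem_range.mpr hrpos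
    exact Finset.single_le_sum (f := fun k => (μ.colLen k : ℤ))
      (fun k _ => by positivity) h0
  -- sum of (s_i - 1)(r - s_i) ≥ 0
  have hP : (0 : ℤ) ≤ ∑ i ∈ Finset.range c,
      ((μ.rowLen i : ℤ) - 1) * ((r : ℤ) - μ.rowLen i) :=
    Finset.sum_nonneg fun i hi => mul_nonneg (by linarith [hrow_ge i hi])
      (by linarith [hrow_le i hi])
  -- expand that sum
  have hPexp : ∑ i ∈ Finset.range c, ((μ.rowLen i : ℤ) - 1) * ((r : ℤ) - μ.rowLen i)
      = ((r : ℤ) + 1) * (2 * n) - (∑ i ∈ Finset.range c, (μ.rowLen i : ℤ) ^ 2)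
        - (r : ℤ) * c := by
    have hcong : ∀ i ∈ Finset.range c, ((μ.rowLen i : ℤ) - 1) * ((r : ℤ) - μ.rowLen i)
        = (((r : ℤ) + 1) * (μ.rowLen i : ℤ) - (μ.rowLen i : ℤ) ^ 2) - (r : ℤ) :=
      fun i _ => by ring
    rw [Finset.sum_congr rfl hcong, Finset.sum_sub_distrib, Finset.sum_sub_distrib,
      ← Finset.mul_sum, hrowsum, Finset.sum_const, Finset.card_range, nsmul_eq_mul]
    ring
  -- column sum lower bound
  have hB : (c : ℤ) * ((c : ℤ) - 1) ≤
      ∑ k ∈ Finset.range r, (μ.colLen k : ℤ) * ((μ.colLen k : ℤ) - 1) := by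
    have h0 : (0 : ℕ) ∈ Finset.range r := Finset.mem_range.mpr hrpos
    have hterm : ∀ k ∈ Finset.range r, (0 : ℤ) ≤ (μ.colLen k : ℤ) * ((μ.colLen k : ℤ) - 1) := by
      intro k _
      rcases Nat.eq_zero_or_pos (μ.colLen k) with h | h
      · simp [h]
      · have : (1 : ℤ) ≤ (μ.colLen k : ℤ) := by exact_mod_cast h
        nlinarith
    exact Finset.single_le_sum hterm h0
  -- express 2 * diag
  have h2diag : 2 * diag μ =
      (∑ i ∈ Finset.range c, (μ.rowLen i : ℤ) * ((μ.rowLen i : ℤ) - 1))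
      - ∑ k ∈ Finset.range r, (μ.colLen k : ℤ) * ((μ.colLen k : ℤ) - 1) := by
    rw [diag, finsum_rows, finsum_cols, mul_sub, Finset.mul_sum, Finset.mul_sum]
    rw [Finset.sum_congr rfl fun i _ => choose_two_cast (μ.rowLen i),
        Finset.sum_congr rfl fun k _ => choose_two_cast (μ.colLen k)]
  -- sum of squares vs sum
  have hsq : ∑ i ∈ Finset.range c, (μ.rowLen i : ℤ) * ((μ.rowLen i : ℤ) - 1)
      = (∑ i ∈ Finset.range c, (μ.rowLen i : ℤ) ^ 2) - 2 * n := by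
    rw [← hrowsum, ← Finset.sum_sub_distrib]
    exact Finset.sum_congr rfl fun i _ => by ring
  rw [h2diag, hsq]
  nlinarith [hP, hPexp, hB, hc2n]

/-- There is a universal constant `C > 0` such that every partition
`λ ⊢ 2n` (`n ≥ 1`) satisfies `Diag(λ) ≤ nλ₁ − λ₁λ*₁/2 − (λ*₁)²/2 + Cn` and
`Diag(λ) ≥ −nλ*₁ + λ₁λ*₁/2 + λ₁²/2 − Cn`. -/
theorem diag_two_sided_bound :
    ∃ C : ℝ, 0 < C ∧ ∀ n : ℕ, 1 ≤ n → ∀ lam : YoungDiagram, lam.card = 2 * n →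
      ((diag lam : ℝ) ≤ (n : ℝ) * lam.rowLen 0 -
          (lam.rowLen 0 : ℝ) * lam.colLen 0 / 2 - (lam.colLen 0 : ℝ) ^ 2 / 2 + C * n) ∧
      (-(n : ℝ) * lam.colLen 0 + (lam.rowLen 0 : ℝ) * lam.colLen 0 / 2 +
          (lam.rowLen 0 : ℝ) ^ 2 / 2 - C * n ≤ (diag lam : ℝ)) := by
  refine ⟨1, one_pos, fun n hn lam hcard => ?_⟩
  have h1 := key lam n hn hcard
  have h2 := key lam.transpose n hn (by rwa [card_transpose])
  rw [diag_transpose] at h2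
  simp only [YoungDiagram.rowLen_transpose, YoungDiagram.colLen_transpose] at h2
  have h1' : (2 * diag lam : ℝ) ≤ 2 * n * (lam.rowLen 0 : ℝ)
      - (lam.rowLen 0 : ℝ) * (lam.colLen 0 : ℝ) - (lam.colLen 0 : ℝ) ^ 2 + 2 * n := by
    exact_mod_cast h1
  have h2' : (2 * (-diag lam) : ℝ) ≤ 2 * n * (lam.colLen 0 : ℝ)
      - (lam.colLen 0 : ℝ) * (lam.rowLen 0 : ℝ) - (lam.rowLen 0 : ℝ) ^ 2 + 2 * n := by
    exact_mod_cast h2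
  constructor <;> push_cast at h1' h2' ⊢ <;> nlinarith

end BRT
end
end

section
/- Fix an integer j ≥ 0. (1) For all sufficiently large n, if λ ⊢ 2n has λ_1 = 2n − j and μ, ν ⊢ n satisfy c^λ_{μ,ν} > 0, then (n − μ_1) + (n − ν_1) ≤ j, i.e. there exist nonnegative integers i_1, i_2 with μ_1 = n − i_1, ν_1 = n − i_2 and i_1 + i_2 ≤ j. (2) There exists a constant C_j depending only on j such that for all sufficiently large n and all such triples (λ, μ, ν) with λ_1 = 2n − j, c^λ_{μ,ν} ≤ C_j. -/
open scoped BigOperators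

noncomputable section

namespace BRT

/-- Number of entries equal to `k` in the prefix of the reverse reading word of the skew
filling `T` of shape `lam/mu` ending at position `(r, j)`: the prefix consists of the rows
`< r` entirely, together with the cells of row `r` of column index `≥ j` (rows are read
right-to-left, top to bottom). -/
def prefixCount (lam mu : YoungDiagram) (T : ℕ → ℕ → ℕ) (r j k : ℕ) : ℕ :=
  (lam.cells.filter fun c =>
    c ∉ mu.cells ∧ T c.1 c.2 = k ∧ (c.1 < r ∨ (c.1 = r ∧ j ≤ c.2))).card

/-- `T : ℕ → ℕ → ℕ` is a Littlewood–Richardson skew tableau of shape `lam/mu` and content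
`nu`: it vanishes outside the skew shape, is weakly increasing along rows and strictly
increasing along columns of the skew shape, has exactly `nu_k` entries equal to `k` for
every `k`, and every prefix of its reverse reading word contains at least as many entries
equal to `k` as entries equal to `k + 1`, for every `k` (lattice word condition). -/
def IsLR (lam mu nu : YoungDiagram) (T : ℕ → ℕ → ℕ) : Prop :=
  (∀ i j : ℕ, ¬((i, j) ∈ lam ∧ (i, j) ∉ mu) → T i j = 0) ∧
  (∀ i j1 j2 : ℕ, j1 < j2 → (i, j1) ∈ lam → (i, j1) ∉ mu → (i, j2) ∈ lam → (i, j2) ∉ mu →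
    T i j1 ≤ T i j2) ∧
  (∀ i1 i2 j : ℕ, i1 < i2 → (i1, j) ∈ lam → (i1, j) ∉ mu → (i2, j) ∈ lam → (i2, j) ∉ mu →
    T i1 j < T i2 j) ∧
  (∀ k, (lam.cells.filter fun c => c ∉ mu.cells ∧ T c.1 c.2 = k).card = nu.rowLen k) ∧
  (∀ r j k, prefixCount lam mu T r j (k + 1) ≤ prefixCount lam mu T r j k)

/-- The Littlewood–Richardson coefficient `c^λ_{μ,ν}`: the number of Littlewood–Richardson
skew tableaux of shape `λ/μ` and content `ν` (and `0` if `μ ⊄ λ`). -/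
def lrCoeff (lam mu nu : YoungDiagram) : ℕ :=
  @ite _ (mu ≤ lam) (Classical.dec _) (Nat.card {T : ℕ → ℕ → ℕ // IsLR lam mu nu T}) 0

/-- Row 0 of an LR skew tableau is all zeros. -/
lemma row0_zero {lam mu nu : YoungDiagram} {T : ℕ → ℕ → ℕ} (hT : IsLR lam mu nu T)
    {c : ℕ} (hmem : (0, c) ∈ lam) (hnmu : (0, c) ∉ mu) : T 0 c = 0 := by
  obtain ⟨h0, hrow, hcol, hcont, hlat⟩ := hT
  have hc : c < lam.rowLen 0 := YoungDiagram.mem_iff_lt_rowLen.mp hmem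
  have hcmu : mu.rowLen 0 ≤ c := by
    by_contra h
    exact hnmu (YoungDiagram.mem_iff_lt_rowLen.mpr (by omega))
  set cs := lam.rowLen 0 - 1 with hcs
  have hcsmem : (0, cs) ∈ lam := YoungDiagram.mem_iff_lt_rowLen.mpr (by omega)
  have hcsnmu : (0, cs) ∉ mu := by
    rw [YoungDiagram.mem_iff_lt_rowLen]; omega
  have hz : T 0 cs = 0 := by
    by_contra h
    obtain ⟨m, hm⟩ : ∃ m, T 0 cs = m + 1 := ⟨T 0 cs - 1, by omega⟩
    have h1 : 0 < prefixCount lam mu T 0 cs (m + 1) := by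
      rw [prefixCount, Finset.card_pos]
      exact ⟨(0, cs), by simp [YoungDiagram.mem_cells, hcsmem, hcsnmu, hm]⟩
    have h2 : prefixCount lam mu T 0 cs m = 0 := by
      rw [prefixCount, Finset.card_eq_zero, Finset.filter_eq_empty_iff]
      rintro ⟨x1, x2⟩ hx
      rintro ⟨hx1, hx2, (h3 | ⟨h3, h4⟩)⟩
      · omega
      · simp only at h3 h4 hx2
        subst h3
        rw [YoungDiagram.mem_cells] at hx
        have hlt : x2 < lam.rowLen 0 := YoungDiagram.mem_iff_lt_rowLen.mp hx
        have hxeq : x2 = cs := by omega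
        rw [hxeq, hm] at hx2
        omega
    have := hlat 0 cs m
    omega
  rcases eq_or_lt_of_le (show c ≤ cs by omega) with h | h
  · rw [h] at *; omega
  · have := hrow 0 c cs h hmem hnmu hcsmem hcsnmu
    omega

/-- μ₁ ≤ λ₁ when μ ≤ λ. -/
lemma rowLen_mono {mu lam : YoungDiagram} (h : mu ≤ lam) (i : ℕ) :
    mu.rowLen i ≤ lam.rowLen i := by
  by_contra hlt
  have : (i, lam.rowLen i) ∈ mu := YoungDiagram.mem_iff_lt_rowLen.mpr (by omega)
  have : (i, lam.rowLen i) ∈ lam := by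
    have := YoungDiagram.cells_subset_iff.mpr h (YoungDiagram.mem_cells _ |>.mpr this)
    simpa [YoungDiagram.mem_cells] using this
  exact absurd (YoungDiagram.mem_iff_lt_rowLen.mp this) (lt_irrefl _)

/-- rowLen 0 ≤ card. -/
lemma rowLen_le_card (mu : YoungDiagram) (i : ℕ) : mu.rowLen i ≤ mu.card := by
  rw [YoungDiagram.rowLen_eq_card]
  exact Finset.card_le_card (fun c hc => (YoungDiagram.mem_cells _).mpr
    ((YoungDiagram.mem_row_iff.mp hc).1))

/-- ν₁ ≥ λ₁ − μ₁. -/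
lemma nu_rowLen_ge {lam mu nu : YoungDiagram} {T : ℕ → ℕ → ℕ} (hT : IsLR lam mu nu T) :
    lam.rowLen 0 - mu.rowLen 0 ≤ nu.rowLen 0 := by
  have hcont := hT.2.2.2.1 0
  rw [← hcont]
  have : (Finset.Ico (mu.rowLen 0) (lam.rowLen 0)).image (fun c => ((0 : ℕ), c)) ⊆
      lam.cells.filter fun c => c ∉ mu.cells ∧ T c.1 c.2 = 0 := by
    intro x hx
    simp only [Finset.mem_image, Finset.mem_Ico] at hx
    obtain ⟨c, ⟨hc1, hc2⟩, rfl⟩ := hx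
    have hmem : (0, c) ∈ lam := YoungDiagram.mem_iff_lt_rowLen.mpr hc2
    have hnmu : (0, c) ∉ mu := by rw [YoungDiagram.mem_iff_lt_rowLen]; omega
    simp only [Finset.mem_filter, YoungDiagram.mem_cells]
    exact ⟨hmem, hnmu, row0_zero hT hmem hnmu⟩
  calc lam.rowLen 0 - mu.rowLen 0
      = ((Finset.Ico (mu.rowLen 0) (lam.rowLen 0)).image (fun c => ((0:ℕ), c))).card := by
        rw [Finset.card_image_of_injective _ (fun a b hab => by simpa using hab)]
        simp
    _ ≤ _ := Finset.card_le_card this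

/-- Entries of an LR tableau in rows ≥ 1 are bounded by the number of skew cells there. -/
lemma val_le {lam mu nu : YoungDiagram} {T : ℕ → ℕ → ℕ} (hT : IsLR lam mu nu T)
    {c : ℕ × ℕ} (hc : c ∈ lam.cells.filter fun x => x ∉ mu.cells ∧ 1 ≤ x.1) :
    T c.1 c.2 ≤ (lam.cells.filter fun x => x ∉ mu.cells ∧ 1 ≤ x.1).card := by
  set S := lam.cells.filter fun x => x ∉ mu.cells ∧ 1 ≤ x.1 with hS
  set m := T c.1 c.2 with hm
  rcases Nat.eq_zero_or_pos m with h | hmpos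
  · omega
  have hsub : ∀ k, 1 ≤ k →
      (lam.cells.filter fun x => x ∉ mu.cells ∧ T x.1 x.2 = k) ⊆ S := by
    rintro k hk ⟨x1, x2⟩ hx
    simp only [Finset.mem_filter] at hx
    obtain ⟨hx1, hx2, hx3⟩ := hx
    rw [hS, Finset.mem_filter]
    refine ⟨hx1, hx2, ?_⟩
    by_contra h
    obtain rfl : x1 = 0 := by omega
    have hx1' : (0, x2) ∈ lam := by simpa [YoungDiagram.mem_cells] using hx1
    have hx2' : (0, x2) ∉ mu := by simpa [YoungDiagram.mem_cells] using hx2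
    have := row0_zero hT hx1' hx2'
    omega
  simp only [hS, Finset.mem_filter] at hc
  obtain ⟨hc1, hc2, hc3⟩ := hc
  have hmpos' : 0 < nu.rowLen m := by
    rw [← hT.2.2.2.1 m]
    exact Finset.card_pos.mpr ⟨c, Finset.mem_filter.mpr ⟨hc1, hc2, rfl⟩⟩
  have hex : ∀ k ∈ Finset.Icc 1 m, ∃ x ∈ S, T x.1 x.2 = k := by
    intro k hk
    rw [Finset.mem_Icc] at hk
    have h1 : 0 < nu.rowLen k := lt_of_lt_of_le hmpos' (YoungDiagram.rowLen_anti nu k m hk.2)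
    rw [← hT.2.2.2.1 k, Finset.card_pos] at h1
    obtain ⟨x, hx⟩ := h1
    exact ⟨x, hsub k hk.1 hx, (Finset.mem_filter.mp hx).2.2⟩
  classical
  set g : ℕ → ℕ × ℕ := fun k =>
    if h : ∃ x ∈ S, T x.1 x.2 = k then h.choose else (0, 0) with hg
  have hgmem : ∀ k ∈ Finset.Icc 1 m, g k ∈ S := by
    intro k hk
    have h := hex k hk
    rw [hg]; simp only [dif_pos h]
    exact h.choose_spec.1
  have hgval : ∀ k ∈ Finset.Icc 1 m, T (g k).1 (g k).2 = k := by
    intro k hk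
    have h := hex k hk
    rw [hg]; simp only [dif_pos h]
    exact h.choose_spec.2
  have hinj : Set.InjOn g ↑(Finset.Icc 1 m) := by
    intro a ha b hb hab
    rw [Finset.mem_coe] at ha hb
    rw [← hgval a ha, ← hgval b hb, hab]
  have := Finset.card_le_card_of_injOn g hgmem hinj
  rw [Nat.card_Icc] at this
  omega

/-- Fix `j ≥ 0`. (1) For all sufficiently large `n`, if `λ ⊢ 2n` has
`λ₁ = 2n − j` and `μ, ν ⊢ n` satisfy `c^λ_{μ,ν} > 0`, then there are `i₁, i₂ ≥ 0` with
`μ₁ = n − i₁`, `ν₁ = n − i₂` and `i₁ + i₂ ≤ j`. (2) There is a constant `C_j` such that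
`c^λ_{μ,ν} ≤ C_j` for all sufficiently large `n` and all such triples. -/
theorem lrCoeff_near_row (j : ℕ) :
    (∃ n0 : ℕ, ∀ n : ℕ, n0 ≤ n → ∀ lam mu nu : YoungDiagram,
      lam.card = 2 * n → lam.rowLen 0 + j = 2 * n → mu.card = n → nu.card = n →
      0 < lrCoeff lam mu nu →
      ∃ i1 i2 : ℕ, i1 + i2 ≤ j ∧ mu.rowLen 0 + i1 = n ∧ nu.rowLen 0 + i2 = n) ∧
    (∃ C : ℕ, ∃ n0 : ℕ, ∀ n : ℕ, n0 ≤ n → ∀ lam mu nu : YoungDiagram,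
      lam.card = 2 * n → lam.rowLen 0 + j = 2 * n → mu.card = n → nu.card = n →
      lrCoeff lam mu nu ≤ C) := by
  have hScard : ∀ (n : ℕ) (lam mu : YoungDiagram), lam.card = 2 * n →
      lam.rowLen 0 + j = 2 * n →
      (lam.cells.filter fun x => x ∉ mu.cells ∧ 1 ≤ x.1).card ≤ j := by
    intro n lam mu hcard hrow
    classical
    have hpart := Finset.card_filter_add_card_filter_not
      (s := lam.cells) (p := fun x => x.1 = 0)
    have heq : (lam.cells.filter fun x => x.1 = 0) = lam.row 0 := by
      ext x
      simp [YoungDiagram.mem_row_iff, YoungDiagram.mem_cells, and_comm]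
    have hrow0 : (lam.cells.filter fun x => x.1 = 0).card = lam.rowLen 0 := by
      rw [heq, YoungDiagram.rowLen_eq_card]
    have hsub : (lam.cells.filter fun x => x ∉ mu.cells ∧ 1 ≤ x.1) ⊆
        lam.cells.filter fun x => ¬x.1 = 0 := by
      intro x hx
      simp only [Finset.mem_filter] at hx ⊢
      exact ⟨hx.1, by omega⟩
    have h5 := Finset.card_le_card hsub
    have h6 : lam.card = lam.cells.card := rfl
    omega
  constructor
  · refine ⟨0, fun n _ lam mu nu hlcard hlrow hmcard hncard hpos => ?_⟩
    rw [lrCoeff] at hpos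
    split_ifs at hpos with hml
    · have hne : Nonempty {T : ℕ → ℕ → ℕ // IsLR lam mu nu T} :=
        (Nat.card_pos_iff.mp hpos).1
      obtain ⟨T, hT⟩ := hne
      have h1 := nu_rowLen_ge hT
      have h2 := rowLen_mono hml 0
      have h3 := rowLen_le_card mu 0
      have h4 := rowLen_le_card nu 0
      refine ⟨n - mu.rowLen 0, n - nu.rowLen 0, by omega, by omega, by omega⟩
    · omega
  · refine ⟨(j + 1) ^ j, 0, fun n _ lam mu nu hlcard hlrow hmcard hncard => ?_⟩
    rw [lrCoeff]
    split_ifs with hml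
    · classical
      set S := lam.cells.filter fun x => x ∉ mu.cells ∧ 1 ≤ x.1 with hS
      have hSj : S.card ≤ j := hScard n lam mu hlcard hlrow
      set f : {T : ℕ → ℕ → ℕ // IsLR lam mu nu T} → (↥S → Fin (j + 1)) :=
        fun T c => ⟨T.1 c.1.1 c.1.2, by
          have h1 := val_le T.2 c.2
          have h2 := hSj
          rw [hS] at h2
          omega⟩ with hf
      have hfinj : Function.Injective f := by
        rintro ⟨T1, hT1⟩ ⟨T2, hT2⟩ hfe
        simp only [Subtype.mk.injEq]
        funext i jc
        by_cases hsk : (i, jc) ∈ lam ∧ (i, jc) ∉ mu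
        · by_cases hi : i = 0
          · subst hi
            rw [row0_zero hT1 hsk.1 hsk.2, row0_zero hT2 hsk.1 hsk.2]
          · have hmem : ((i, jc) : ℕ × ℕ) ∈ S := by
              rw [hS, Finset.mem_filter]
              exact ⟨(YoungDiagram.mem_cells _).mpr hsk.1,
                by simpa [YoungDiagram.mem_cells] using hsk.2, by omega⟩
            have := congrFun hfe ⟨(i, jc), hmem⟩
            simpa [hf, Fin.ext_iff] using this
        · rw [hT1.1 i jc hsk, hT2.1 i jc hsk]
      calc Nat.card {T : ℕ → ℕ → ℕ // IsLR lam mu nu T}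
          ≤ Nat.card (↥S → Fin (j + 1)) := Nat.card_le_card_of_injective f hfinj
        _ = (j + 1) ^ S.card := by
            rw [Nat.card_eq_fintype_card, Fintype.card_fun]
            simp
        _ ≤ (j + 1) ^ j := Nat.pow_le_pow_right (by omega) hSj
    · exact Nat.zero_le _


end BRT
end
end

section
/- Let 0 < b < a be real numbers with a + b = 2, and let i₁, i₂, j be nonnegative integers with i₁ + i₂ ≤ j. Set B = i₁·a² + i₂·b² + (2j − i₁ − i₂)·a·b. Then B ≥ 2b·(i₁ + i₂), and if B = 2b·(i₁ + i₂) then i₁ = 0 and i₂ = j. -/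
open scoped BigOperators

noncomputable section

namespace BRT

/-- Let `0 < b < a`, `a + b = 2`, and `i₁ + i₂ ≤ j`. With
`B = i₁a² + i₂b² + (2j − i₁ − i₂)ab`, one has `B ≥ 2b(i₁ + i₂)`, and if
`B = 2b(i₁ + i₂)` then `i₁ = 0` and `i₂ = j`. -/
theorem exponent_nonpositive (a b : ℝ) (hb : 0 < b) (hba : b < a) (hab : a + b = 2)
    (i1 i2 j : ℕ) (hij : i1 + i2 ≤ j) :
    2 * b * ((i1 : ℝ) + i2) ≤
      (i1 : ℝ) * a ^ 2 + (i2 : ℝ) * b ^ 2 + (2 * (j : ℝ) - i1 - i2) * a * b ∧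
    ((i1 : ℝ) * a ^ 2 + (i2 : ℝ) * b ^ 2 + (2 * (j : ℝ) - i1 - i2) * a * b =
        2 * b * ((i1 : ℝ) + i2) → i1 = 0 ∧ i2 = j) := by
  have ha : 0 < a := hb.trans hba
  have hj : ((i1 : ℝ) + i2) ≤ j := by exact_mod_cast hij
  have key : (i1 : ℝ) * a ^ 2 + (i2 : ℝ) * b ^ 2 + (2 * (j : ℝ) - i1 - i2) * a * b
      - 2 * b * ((i1 : ℝ) + i2)
      = (i1 : ℝ) * (a ^ 2 - b ^ 2) + 2 * a * b * ((j : ℝ) - i1 - i2) := by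
    linear_combination ((i1 : ℝ) + i2) * b * hab
  have hab2 : 0 < a ^ 2 - b ^ 2 := by nlinarith
  have hi1 : (0 : ℝ) ≤ i1 := Nat.cast_nonneg i1
  have hd : (0 : ℝ) ≤ (j : ℝ) - i1 - i2 := by linarith
  have t1 : (0 : ℝ) ≤ (i1 : ℝ) * (a ^ 2 - b ^ 2) := mul_nonneg hi1 hab2.le
  have hab3 : (0 : ℝ) < 2 * a * b := by positivity
  have t2 : (0 : ℝ) ≤ 2 * a * b * ((j : ℝ) - i1 - i2) := mul_nonneg hab3.le hd
  constructor
  · linarith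
  · intro heq
    have e1 : (i1 : ℝ) * (a ^ 2 - b ^ 2) = 0 := by linarith
    have e2 : 2 * a * b * ((j : ℝ) - i1 - i2) = 0 := by linarith
    have h1 : (i1 : ℝ) = 0 := by
      rcases mul_eq_zero.mp e1 with h | h
      · exact h
      · linarith
    have h2 : (j : ℝ) - i1 - i2 = 0 := by
      rcases mul_eq_zero.mp e2 with h | h
      · linarith
      · exact h
    have hi10 : i1 = 0 := by exact_mod_cast h1
    have hjv : (j : ℝ) = i1 + i2 := by linarith
    have : j = i1 + i2 := by exact_mod_cast hjv
    omega

end BRT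
end
end

section
/- Let 0 < b ≤ a be real numbers with a + b = 2 and define Q_R(x, y) = (a² − b²)/4 + ((a² − ab)/2)·(x² − x) + ((ab − b²)/2)·(y² − y) + (ab/2)·(x − xy/2 − y²/2). Then for all x ∈ [0.7, 1] and y ∈ [0.5, 0.7], both Q_R(x, y) ≤ a²/4 + 3ab/16 − b²/8 and Q_R(y, x) ≤ a²/4 + 3ab/16 − b²/8. -/
open scoped BigOperators

noncomputable section

namespace BRT

/-- The auxiliary function `Q_R` used in the red zone analysis. -/
def QR (a b x y : ℝ) : ℝ :=
  (a ^ 2 - b ^ 2) / 4 + (a ^ 2 - a * b) / 2 * (x ^ 2 - x) +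
    (a * b - b ^ 2) / 2 * (y ^ 2 - y) + a * b / 2 * (x - x * y / 2 - y ^ 2 / 2)

/-- Let `0 < b ≤ a` with `a + b = 2`. For all `x ∈ [0.7, 1]` and
`y ∈ [0.5, 0.7]`, both `Q_R(x,y)` and `Q_R(y,x)` are at most `a²/4 + 3ab/16 − b²/8`. -/
theorem QR_bound (a b : ℝ) (hb : 0 < b) (hba : b ≤ a) (hab : a + b = 2)
    (x y : ℝ) (hx1 : 0.7 ≤ x) (hx2 : x ≤ 1) (hy1 : 0.5 ≤ y) (hy2 : y ≤ 0.7) :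
    QR a b x y ≤ a ^ 2 / 4 + 3 * a * b / 16 - b ^ 2 / 8 ∧
    QR a b y x ≤ a ^ 2 / 4 + 3 * a * b / 16 - b ^ 2 / 8 := by
  have ha : (0:ℝ) < a := lt_of_lt_of_le hb hba
  have hab' : 0 ≤ a * b := mul_nonneg ha.le hb.le
  have t1 : 0 ≤ b ^ 2 * (y - 1/2) ^ 2 := mul_nonneg (sq_nonneg b) (sq_nonneg _)
  have t2 : 0 ≤ a * b * ((y - 1/2) * (x - y + 3/2)) :=
    mul_nonneg hab' (mul_nonneg (by linarith) (by linarith))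
  have t3 : 0 ≤ a * b * (1 - x) := mul_nonneg hab' (by linarith)
  have t4 : 0 ≤ a * (a - b) * ((1 - x) * x) :=
    mul_nonneg (mul_nonneg ha.le (by linarith)) (mul_nonneg (by linarith) (by linarith))
  have s1 : 0 ≤ b ^ 2 * (x - 1/2) ^ 2 := mul_nonneg (sq_nonneg b) (sq_nonneg _)
  have s2 : 0 ≤ a * (a - b) * (y * (1 - y)) :=
    mul_nonneg (mul_nonneg ha.le (by linarith)) (mul_nonneg (by linarith) (by linarith))
  have s3 : 0 ≤ a * b * ((x - y) * (2 - x)) :=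
    mul_nonneg hab' (mul_nonneg (by linarith) (by linarith))
  constructor
  · unfold QR; nlinarith [t1, t2, t3, t4]
  · unfold QR; nlinarith [s1, s2, s3, hab']

end BRT
end
end

section
/- Let 0 < b ≤ a be real numbers with a + b = 2 and set a* = 2 − 1/a. Define T_B(x) = √((2·e^{(b/2)(x−1)} − a)/(ab)). Then for every x ∈ [0, a* − 1], the quantity 2·e^{(b/2)(x−1)} − a is positive and T_B(x) > x; consequently (T_B(x) + x)/2 > x. -/
open scoped BigOperators

noncomputable section

namespace BRT

/-- Let `0 < b ≤ a` with `a + b = 2` and `a* = 2 − 1/a`. With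
`T_B(x) = √((2 e^{(b/2)(x−1)} − a)/(ab))`, for every `x ∈ [0, a* − 1]` the quantity
`2 e^{(b/2)(x−1)} − a` is positive and `T_B(x) > x`; consequently `(T_B(x) + x)/2 > x`. -/
theorem TB_above_diagonal (a b : ℝ) (hb : 0 < b) (hba : b ≤ a) (hab : a + b = 2)
    (x : ℝ) (hx0 : 0 ≤ x) (hx1 : x ≤ (2 - 1 / a) - 1) :
    0 < 2 * Real.exp (b / 2 * (x - 1)) - a ∧
    x < Real.sqrt ((2 * Real.exp (b / 2 * (x - 1)) - a) / (a * b)) ∧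
    x < (Real.sqrt ((2 * Real.exp (b / 2 * (x - 1)) - a) / (a * b)) + x) / 2 := by
  have ha : 1 ≤ a := by linarith
  have ha0 : 0 < a := by linarith
  have hinv : 0 < 1 / a := by positivity
  have hx1' : x < 1 := by linarith
  have ht : b / 2 * (x - 1) < 0 := by nlinarith
  have he : b / 2 * (x - 1) + 1 < Real.exp (b / 2 * (x - 1)) :=
    Real.add_one_lt_exp (ne_of_lt ht)
  have hax : a * x ≤ a - 1 := by
    have := (div_le_iff₀ ha0).mp (by linarith : 1 / a ≤ 2 - x - 1)
    nlinarith
  have key : a * b * x ^ 2 < 2 * Real.exp (b / 2 * (x - 1)) - a := by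
    have h1 : a + b * x ≤ 2 * (b / 2 * (x - 1) + 1) := by nlinarith
    nlinarith [sq_nonneg x, mul_nonneg hx0 (by linarith : (0:ℝ) ≤ 1 - a * x)]
  have hpos : 0 < 2 * Real.exp (b / 2 * (x - 1)) - a := by nlinarith [sq_nonneg x]
  have hab0 : 0 < a * b := by positivity
  have hsq : x ^ 2 < (2 * Real.exp (b / 2 * (x - 1)) - a) / (a * b) := by
    rw [lt_div_iff₀ hab0]; nlinarith
  have hs : x < Real.sqrt ((2 * Real.exp (b / 2 * (x - 1)) - a) / (a * b)) :=
    (Real.lt_sqrt hx0).mpr hsq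
  exact ⟨hpos, hs, by linarith⟩

end BRT
end
end
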